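/- arXiv:2508.16014 — 6 statements merged into one kernel-verified Lean document; each statement's English description precedes it below -/
import Mathlib

section
/- Every binary tree T with at least 2 leaves has a subtree T' such that |T|/3 ≤ |T'| < 2|T|/3, where |T| denotes the number of leaves of T (Spira's lemma). -/
/-- Binary trees: every internal node has exactly two children. -/
inductive BTree where
  | leaf : BTree
  | node : BTree → BTree → BTree

/-- The number of leaves of a binary tree. -/
def BTree.leaves : BTree → ℕ
  | .leaf => 1
  | .node l r => l.leaves + r.leaves

/-- `T'.Subtree T` means `T'` is the subtree of `T` rooted at some node of `T`. -/
inductive BTree.Subtree : BTree → BTree → Prop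
  | refl (t : BTree) : BTree.Subtree t t
  | left {t l r : BTree} : BTree.Subtree t l → BTree.Subtree t (.node l r)
  | right {t l r : BTree} : BTree.Subtree t r → BTree.Subtree t (.node l r)


theorem spira_aux (n : ℕ) (hn : 2 ≤ n) :
    ∀ t : BTree, 2 * n ≤ 3 * t.leaves →
      ∃ T' : BTree, T'.Subtree t ∧ n ≤ 3 * T'.leaves ∧ 3 * T'.leaves < 2 * n := by
  intro t
  induction t with
  | leaf => intro ht; simp [BTree.leaves] at ht; omega
  | node l r ihl ihr =>
    intro ht
    simp only [BTree.leaves] at ht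
    rcases le_total l.leaves r.leaves with hlr | hlr
    · by_cases hc : 2 * n ≤ 3 * r.leaves
      · obtain ⟨T', hs, h1, h2⟩ := ihr hc
        exact ⟨T', .right hs, h1, h2⟩
      · exact ⟨r, .right (.refl r), by omega, by omega⟩
    · by_cases hc : 2 * n ≤ 3 * l.leaves
      · obtain ⟨T', hs, h1, h2⟩ := ihl hc
        exact ⟨T', .left hs, h1, h2⟩
      · exact ⟨l, .left (.refl l), by omega, by omega⟩

/-- Spira's lemma: every binary tree `T` with at least 2 leaves has a subtree `T'`
with `|T|/3 ≤ |T'| < 2|T|/3`. -/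
theorem spira (T : BTree) (h : 2 ≤ T.leaves) :
    ∃ T' : BTree, T'.Subtree T ∧ T.leaves ≤ 3 * T'.leaves ∧ 3 * T'.leaves < 2 * T.leaves := by
  exact spira_aux T.leaves h T (by omega)
end

section
/- In the game NB, for queries P, P' and a query Q[X] with a distinguished subquery occurrence X, from the state {P ↦ b, P' ↦ b, Q[P] ↦ c, Q[P'] ↦ 1−c} Prover has a winning strategy using O(log(depth(Q[X]))) rounds (Leibniz property). -/
/-- eNDT formulas. -/
inductive ENDT where
  | zero : ENDT
  | one : ENDT
  | dec : ENDT → ℕ → ENDT → ENDT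
  | orf : ENDT → ENDT → ENDT
  | ext : ℕ → ENDT

/-- Strict upper bound on extension variable indices occurring in a formula. -/
def ENDT.extBound : ENDT → ℕ
  | .zero => 0
  | .one => 0
  | .dec A _ B => max A.extBound B.extBound
  | .orf A B => max A.extBound B.extBound
  | .ext i => i + 1

/-- The propositional variable `p`, identified with the formula `0 p 1`. -/
def ENDT.pvar (p : ℕ) : ENDT := .dec .zero p .one

/-- The simulation judgement `A ≽_E B`. -/
inductive ENDT.Sim (E : ℕ → ENDT) : ENDT → ENDT → Prop
  | refl (A : ENDT) : ENDT.Sim E A A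
  | dec {A B C D : ENDT} (p : ℕ) : ENDT.Sim E A C → ENDT.Sim E B D →
      ENDT.Sim E (.dec A p B) (.dec C p D)
  | orR {A C D : ENDT} : ENDT.Sim E A C → ENDT.Sim E A D → ENDT.Sim E A (.orf C D)
  | orL0 {A0 A1 B : ENDT} : ENDT.Sim E A0 B → ENDT.Sim E (.orf A0 A1) B
  | orL1 {A0 A1 B : ENDT} : ENDT.Sim E A1 B → ENDT.Sim E (.orf A0 A1) B
  | extR {A : ENDT} (i : ℕ) : ENDT.Sim E A (E i) → ENDT.Sim E A (.ext i)
  | extL {B : ENDT} (i : ℕ) : ENDT.Sim E (E i) B → ENDT.Sim E (.ext i) B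

/-- Queries of the game `NB`: Boolean combinations of eNDT formulas. -/
inductive BQuery where
  | base : ENDT → BQuery
  | not : BQuery → BQuery
  | or : BQuery → BQuery → BQuery
  | and : BQuery → BQuery → BQuery

/-- The simple contradictions of the game `NB` over extension axioms `E`. -/
inductive NBContr (E : ℕ → ENDT) : Set (BQuery × Bool) → Prop
  | bool0 : NBContr E {(.base .zero, true)}
  | bool1 : NBContr E {(.base .one, false)}
  | decision (A0 A1 : ENDT) (p : ℕ) (i b0 b1 c : Bool) (h : c ≠ if i then b1 else b0) :
      NBContr E
        {(.base A0, b0), (.base A1, b1), (.base (ENDT.pvar p), i), (.base (.dec A0 p A1), c)}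
  | notc (Q : BQuery) (b : Bool) : NBContr E {(.not Q, b), (Q, b)}
  | orc0 (Q0 Q1 : BQuery) : NBContr E {(.or Q0 Q1, false), (Q0, true)}
  | orc1 (Q0 Q1 : BQuery) : NBContr E {(.or Q0 Q1, false), (Q1, true)}
  | orc2 (Q0 Q1 : BQuery) : NBContr E {(.or Q0 Q1, true), (Q0, false), (Q1, false)}
  | andc0 (Q0 Q1 : BQuery) : NBContr E {(.and Q0 Q1, true), (Q0, false)}
  | andc1 (Q0 Q1 : BQuery) : NBContr E {(.and Q0 Q1, true), (Q1, false)}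
  | andc2 (Q0 Q1 : BQuery) : NBContr E {(.and Q0 Q1, false), (Q0, true), (Q1, true)}
  | extc (i : ℕ) (b : Bool) : NBContr E {(.base (.ext i), b), (.base (E i), !b)}
  | simc (A B : ENDT) (h : ENDT.Sim E A B) : NBContr E {(.base A, false), (.base B, true)}

/-- Prover strategies: binary trees of queries. -/
inductive Strategy (Q : Type) where
  | leaf : Strategy Q
  | ask : Q → Strategy Q → Strategy Q → Strategy Q

/-- The depth (number of rounds) of a strategy. -/
def Strategy.depth {Q : Type} : Strategy Q → ℕ
  | .leaf => 0
  | .ask _ s0 s1 => max s0.depth s1.depth + 1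

/-- `Wins IsContr Good σ S`: playing strategy `σ` from state `S`, every leaf state either
contains a simple contradiction (Prover wins) or satisfies `Good`. -/
def Wins {Q : Type} (IsContr : Set (Q × Bool) → Prop) (Good : Set (Q × Bool) → Prop) :
    Strategy Q → Set (Q × Bool) → Prop
  | .leaf, S => (∃ t, IsContr t ∧ t ⊆ S) ∨ Good S
  | .ask q s0 s1, S =>
      Wins IsContr Good s0 (insert (q, false) S) ∧ Wins IsContr Good s1 (insert (q, true) S)

/-- The depth of a query: the maximum length of a path from the root of the Boolean
combination to a maximal eNDT subformula. -/
def qdepth : BQuery → ℕ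
  | .base _ => 0
  | .not Q => qdepth Q + 1
  | .or Q R => max (qdepth Q) (qdepth R) + 1
  | .and Q R => max (qdepth Q) (qdepth R) + 1

/-- A query context `Q[X]`: a query with a single distinguished subquery occurrence `X`. -/
inductive Ctx where
  | hole : Ctx
  | not : Ctx → Ctx
  | orL : Ctx → BQuery → Ctx
  | orR : BQuery → Ctx → Ctx
  | andL : Ctx → BQuery → Ctx
  | andR : BQuery → Ctx → Ctx

/-- Substituting a query into the hole of a context. -/
def Ctx.fill : Ctx → BQuery → BQuery
  | .hole, P => P
  | .not C, P => .not (C.fill P)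
  | .orL C R, P => .or (C.fill P) R
  | .orR Q C, P => .or Q (C.fill P)
  | .andL C R, P => .and (C.fill P) R
  | .andR Q C, P => .and Q (C.fill P)

/-! ### Auxiliary development for the Leibniz property -/

/-- Depth of a context (length of the path to the hole). -/
def Ctx.cdepth : Ctx → ℕ
  | .hole => 0
  | .not C => C.cdepth + 1
  | .orL C _ => C.cdepth + 1
  | .orR _ C => C.cdepth + 1
  | .andL C _ => C.cdepth + 1
  | .andR _ C => C.cdepth + 1

/-- Composition of contexts. -/
def Ctx.comp : Ctx → Ctx → Ctx
  | .hole, D => D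
  | .not C, D => .not (C.comp D)
  | .orL C R, D => .orL (C.comp D) R
  | .orR Q C, D => .orR Q (C.comp D)
  | .andL C R, D => .andL (C.comp D) R
  | .andR Q C, D => .andR Q (C.comp D)

lemma Ctx.fill_comp (C D : Ctx) (P : BQuery) :
    (C.comp D).fill P = C.fill (D.fill P) := by
  induction C <;> simp [Ctx.comp, Ctx.fill, *]

/-- Split a context into an outer part of depth ≤ k and an inner rest. -/
def Ctx.split : ℕ → Ctx → Ctx × Ctx
  | 0, C => (.hole, C)
  | _ + 1, .hole => (.hole, .hole)
  | k + 1, .not C => ((Ctx.split k C).1.not, (Ctx.split k C).2)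
  | k + 1, .orL C R => ((Ctx.split k C).1.orL R, (Ctx.split k C).2)
  | k + 1, .orR Q C => (Ctx.orR Q (Ctx.split k C).1, (Ctx.split k C).2)
  | k + 1, .andL C R => ((Ctx.split k C).1.andL R, (Ctx.split k C).2)
  | k + 1, .andR Q C => (Ctx.andR Q (Ctx.split k C).1, (Ctx.split k C).2)

lemma Ctx.split_comp (k : ℕ) (C : Ctx) :
    ((Ctx.split k C).1).comp ((Ctx.split k C).2) = C := by
  induction k generalizing C with
  | zero => simp [Ctx.split, Ctx.comp]
  | succ k ih => cases C <;> simp [Ctx.split, Ctx.comp, ih]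

lemma Ctx.split_fst_cdepth (k : ℕ) (C : Ctx) : ((Ctx.split k C).1).cdepth ≤ k := by
  induction k generalizing C with
  | zero => simp [Ctx.split, Ctx.cdepth]
  | succ k ih =>
      cases C <;> simp [Ctx.split, Ctx.cdepth] <;> exact ih _

lemma Ctx.split_snd_cdepth (k : ℕ) (C : Ctx) :
    ((Ctx.split k C).2).cdepth ≤ C.cdepth - k := by
  induction k generalizing C with
  | zero => simp [Ctx.split]
  | succ k ih =>
      cases C <;> simp [Ctx.split, Ctx.cdepth] <;>
        first
        | rfl
        | exact le_trans (ih _) (by omega)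

lemma Ctx.cdepth_le_qdepth_fill (C : Ctx) (P : BQuery) :
    C.cdepth ≤ qdepth (C.fill P) := by
  induction C <;> simp [Ctx.cdepth, Ctx.fill, qdepth] <;> omega

lemma Ctx.cdepth_eq_zero {C : Ctx} (h : C.cdepth = 0) : C = .hole := by
  cases C <;> simp [Ctx.cdepth] at h ⊢

/-- Winning is monotone in the state (for `Good = False`). -/
lemma wins_mono {Q : Type} {IC : Set (Q × Bool) → Prop} {σ : Strategy Q}
    {S S' : Set (Q × Bool)} (h : Wins IC (fun _ => False) σ S) (hs : S ⊆ S') :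
    Wins IC (fun _ => False) σ S' := by
  induction σ generalizing S S' with
  | leaf =>
      rcases h with ⟨t, ht, hts⟩ | h
      · exact Or.inl ⟨t, ht, hts.trans hs⟩
      · exact absurd h (by simp)
  | ask q s0 s1 ih0 ih1 =>
      exact ⟨ih0 h.1 (Set.insert_subset_insert hs), ih1 h.2 (Set.insert_subset_insert hs)⟩

/-- Resolving a clash `(Q, false), (Q, true)` in one round. -/
lemma wins_clash {E : ℕ → ENDT} {Q : BQuery} {S : Set (BQuery × Bool)}
    (h0 : (Q, false) ∈ S) (h1 : (Q, true) ∈ S) :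
    Wins (NBContr E) (fun _ => False) (.ask (.not Q) .leaf .leaf) S := by
  constructor
  · exact Or.inl ⟨_, NBContr.notc Q false, by
      intro x hx; simp only [Set.mem_insert_iff, Set.mem_singleton_iff] at hx
      rcases hx with h | h <;> subst h <;> simp [h0]⟩
  · exact Or.inl ⟨_, NBContr.notc Q true, by
      intro x hx; simp only [Set.mem_insert_iff, Set.mem_singleton_iff] at hx
      rcases hx with h | h <;> subst h <;> simp [h1]⟩

/-- One-element simple contradiction inclusion helper. -/
lemma wins_leaf {E : ℕ → ENDT} {S t : Set (BQuery × Bool)}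
    (ht : NBContr E t) (hts : t ⊆ S) :
    Wins (NBContr E) (fun _ => False) (.leaf : Strategy BQuery) S :=
  Or.inl ⟨t, ht, hts⟩

/-- Key divide-and-conquer lemma: if the context depth is at most `2 ^ n`, Prover wins
in at most `2 * n + 1` rounds. -/
lemma leibniz_key (E : ℕ → ENDT) :
    ∀ n (C : Ctx), C.cdepth ≤ 2 ^ n → ∀ (P P' : BQuery) (b c : Bool),
      ∃ σ : Strategy BQuery, σ.depth ≤ 2 * n + 1 ∧
        Wins (NBContr E) (fun _ => False) σ
          {(P, b), (P', b), (C.fill P, c), (C.fill P', !c)} := by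
  intro n
  induction n with
  | zero =>
      intro C hC P P' b c
      cases C with
      | hole =>
          simp only [Ctx.fill]
          cases b <;> cases c
          · exact ⟨.ask (.not P') .leaf .leaf, by simp [Strategy.depth],
              wins_clash (by simp) (by simp)⟩
          · exact ⟨.ask (.not P) .leaf .leaf, by simp [Strategy.depth],
              wins_clash (by simp) (by simp)⟩
          · exact ⟨.ask (.not P) .leaf .leaf, by simp [Strategy.depth],
              wins_clash (by simp) (by simp)⟩
          · exact ⟨.ask (.not P') .leaf .leaf, by simp [Strategy.depth],
              wins_clash (by simp) (by simp)⟩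
      | not C' =>
          obtain rfl : C' = Ctx.hole :=
            Ctx.cdepth_eq_zero (by simp [Ctx.cdepth] at hC; omega)
          simp only [Ctx.fill]
          cases b <;> cases c
          · exact ⟨.leaf, by simp [Strategy.depth],
              wins_leaf (NBContr.notc P false) (by simp [Set.insert_subset_iff])⟩
          · exact ⟨.leaf, by simp [Strategy.depth],
              wins_leaf (NBContr.notc P' false) (by simp [Set.insert_subset_iff])⟩
          · exact ⟨.leaf, by simp [Strategy.depth],
              wins_leaf (NBContr.notc P' true) (by simp [Set.insert_subset_iff])⟩
          · exact ⟨.leaf, by simp [Strategy.depth],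
              wins_leaf (NBContr.notc P true) (by simp [Set.insert_subset_iff])⟩
      | orL C' R =>
          obtain rfl : C' = Ctx.hole :=
            Ctx.cdepth_eq_zero (by simp [Ctx.cdepth] at hC; omega)
          simp only [Ctx.fill]
          cases b <;> cases c
          · exact ⟨.ask R .leaf .leaf, by simp [Strategy.depth],
              wins_leaf (NBContr.orc2 P' R) (by simp [Set.insert_subset_iff]),
              wins_leaf (NBContr.orc1 P R) (by simp [Set.insert_subset_iff])⟩
          · exact ⟨.ask R .leaf .leaf, by simp [Strategy.depth],
              wins_leaf (NBContr.orc2 P R) (by simp [Set.insert_subset_iff]),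
              wins_leaf (NBContr.orc1 P' R) (by simp [Set.insert_subset_iff])⟩
          · exact ⟨.leaf, by simp [Strategy.depth],
              wins_leaf (NBContr.orc0 P R) (by simp [Set.insert_subset_iff])⟩
          · exact ⟨.leaf, by simp [Strategy.depth],
              wins_leaf (NBContr.orc0 P' R) (by simp [Set.insert_subset_iff])⟩
      | orR Q C' =>
          obtain rfl : C' = Ctx.hole :=
            Ctx.cdepth_eq_zero (by simp [Ctx.cdepth] at hC; omega)
          simp only [Ctx.fill]
          cases b <;> cases c
          · exact ⟨.ask Q .leaf .leaf, by simp [Strategy.depth],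
              wins_leaf (NBContr.orc2 Q P') (by simp [Set.insert_subset_iff]),
              wins_leaf (NBContr.orc0 Q P) (by simp [Set.insert_subset_iff])⟩
          · exact ⟨.ask Q .leaf .leaf, by simp [Strategy.depth],
              wins_leaf (NBContr.orc2 Q P) (by simp [Set.insert_subset_iff]),
              wins_leaf (NBContr.orc0 Q P') (by simp [Set.insert_subset_iff])⟩
          · exact ⟨.leaf, by simp [Strategy.depth],
              wins_leaf (NBContr.orc1 Q P) (by simp [Set.insert_subset_iff])⟩
          · exact ⟨.leaf, by simp [Strategy.depth],
              wins_leaf (NBContr.orc1 Q P') (by simp [Set.insert_subset_iff])⟩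
      | andL C' R =>
          obtain rfl : C' = Ctx.hole :=
            Ctx.cdepth_eq_zero (by simp [Ctx.cdepth] at hC; omega)
          simp only [Ctx.fill]
          cases b <;> cases c
          · exact ⟨.leaf, by simp [Strategy.depth],
              wins_leaf (NBContr.andc0 P' R) (by simp [Set.insert_subset_iff])⟩
          · exact ⟨.leaf, by simp [Strategy.depth],
              wins_leaf (NBContr.andc0 P R) (by simp [Set.insert_subset_iff])⟩
          · exact ⟨.ask R .leaf .leaf, by simp [Strategy.depth],
              wins_leaf (NBContr.andc1 P' R) (by simp [Set.insert_subset_iff]),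
              wins_leaf (NBContr.andc2 P R) (by simp [Set.insert_subset_iff])⟩
          · exact ⟨.ask R .leaf .leaf, by simp [Strategy.depth],
              wins_leaf (NBContr.andc1 P R) (by simp [Set.insert_subset_iff]),
              wins_leaf (NBContr.andc2 P' R) (by simp [Set.insert_subset_iff])⟩
      | andR Q C' =>
          obtain rfl : C' = Ctx.hole :=
            Ctx.cdepth_eq_zero (by simp [Ctx.cdepth] at hC; omega)
          simp only [Ctx.fill]
          cases b <;> cases c
          · exact ⟨.leaf, by simp [Strategy.depth],
              wins_leaf (NBContr.andc1 Q P') (by simp [Set.insert_subset_iff])⟩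
          · exact ⟨.leaf, by simp [Strategy.depth],
              wins_leaf (NBContr.andc1 Q P) (by simp [Set.insert_subset_iff])⟩
          · exact ⟨.ask Q .leaf .leaf, by simp [Strategy.depth],
              wins_leaf (NBContr.andc0 Q P') (by simp [Set.insert_subset_iff]),
              wins_leaf (NBContr.andc2 Q P) (by simp [Set.insert_subset_iff])⟩
          · exact ⟨.ask Q .leaf .leaf, by simp [Strategy.depth],
              wins_leaf (NBContr.andc0 Q P) (by simp [Set.insert_subset_iff]),
              wins_leaf (NBContr.andc2 Q P') (by simp [Set.insert_subset_iff])⟩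
  | succ n ih =>
      intro C hC P P' b c
      have h1 : ((Ctx.split (2 ^ n) C).1).cdepth ≤ 2 ^ n := Ctx.split_fst_cdepth _ _
      have h2 : ((Ctx.split (2 ^ n) C).2).cdepth ≤ 2 ^ n := by
        have h := Ctx.split_snd_cdepth (2 ^ n) C
        have h' : (2 : ℕ) ^ (n + 1) = 2 ^ n + 2 ^ n := by ring
        omega
      set C1 := (Ctx.split (2 ^ n) C).1 with hC1
      set C2 := (Ctx.split (2 ^ n) C).2 with hC2
      have hfP : C.fill P = C1.fill (C2.fill P) := by
        rw [← Ctx.split_comp (2 ^ n) C, Ctx.fill_comp]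
      have hfP' : C.fill P' = C1.fill (C2.fill P') := by
        rw [← Ctx.split_comp (2 ^ n) C, Ctx.fill_comp]
      rw [hfP, hfP']
      obtain ⟨σff, dff, wff⟩ := ih C1 h1 (C2.fill P) (C2.fill P') false c
      obtain ⟨σtt, dtt, wtt⟩ := ih C1 h1 (C2.fill P) (C2.fill P') true c
      obtain ⟨σft, dft, wft⟩ := ih C2 h2 P P' b false
      obtain ⟨σtf, dtf, wtf⟩ := ih C2 h2 P P' b true
      refine ⟨.ask (C2.fill P) (.ask (C2.fill P') σff σft) (.ask (C2.fill P') σtf σtt),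
        by simp [Strategy.depth]; omega, ⟨?_, ?_⟩, ?_, ?_⟩
      · exact wins_mono wff (by simp [Set.insert_subset_iff])
      · exact wins_mono wft (by simp [Set.insert_subset_iff])
      · exact wins_mono wtf (by simp [Set.insert_subset_iff])
      · exact wins_mono wtt (by simp [Set.insert_subset_iff])

/-- Leibniz property: from `{P ↦ b, P' ↦ b, Q[P] ↦ c, Q[P'] ↦ 1−c}` Prover has a winning
strategy in `NB` using `O(log (depth Q[X]))` rounds, where `depth Q[X]` is computed with
the distinguished occurrence `X` treated as an atomic leaf. -/
theorem leibniz_property :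
    ∃ cst : ℕ, ∀ (E : ℕ → ENDT), (∀ i, (E i).extBound ≤ i) →
      ∀ (P P' : BQuery) (C : Ctx) (b c : Bool),
        ∃ σ : Strategy BQuery,
          σ.depth ≤ cst * (Nat.log 2 (qdepth (C.fill (.base .zero)) + 1) + 1) ∧
          Wins (NBContr E) (fun _ => False) σ
            {(P, b), (P', b), (C.fill P, c), (C.fill P', !c)} := by
  refine ⟨3, fun E _ P P' C b c => ?_⟩
  obtain ⟨σ, hd, hw⟩ := leibniz_key E (Nat.log 2 C.cdepth + 1) C
    (le_of_lt (Nat.lt_pow_succ_log_self (by norm_num) _)) P P' b c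
  refine ⟨σ, ?_, hw⟩
  have h1 : Nat.log 2 C.cdepth ≤ Nat.log 2 (qdepth (C.fill (.base .zero)) + 1) :=
    Nat.log_mono_right (by have := Ctx.cdepth_le_qdepth_fill C (.base .zero); omega)
  omega
end

section
/- The positive decision (A ⟨B⟩⁺ C) satisfies the truth conditions: (i) if (A⟨B⟩⁺C) is true then A is true or B is true; (ii) if (A⟨B⟩⁺C) is true then A is true or C is true; (iii) if A is true then (A⟨B⟩⁺C) is true; (iv) if both B and C are true then (A⟨B⟩⁺C) is true. Equivalently, (A⟨B⟩⁺C) is semantically equivalent to A ∨ (B ∧ C). -/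
def ENDT.fsize : ENDT → ℕ
  | .zero => 1
  | .one => 1
  | .dec A _ B => A.fsize + B.fsize + 1
  | .orf A B => A.fsize + B.fsize + 1
  | .ext _ => 1

/-- Satisfaction `α ⊨_E A` of eNDT formulas over extension axioms `E`, by `E`-induction. -/
inductive Sat (E : ℕ → ENDT) (α : ℕ → Bool) : ENDT → Prop
  | one : Sat E α .one
  | decF {A B : ENDT} {p : ℕ} : α p = false → Sat E α A → Sat E α (.dec A p B)
  | decT {A B : ENDT} {p : ℕ} : α p = true → Sat E α B → Sat E α (.dec A p B)
  | orl {A B : ENDT} : Sat E α A → Sat E α (.orf A B)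
  | orr {A B : ENDT} : Sat E α B → Sat E α (.orf A B)
  | ext {i : ℕ} : Sat E α (E i) → Sat E α (.ext i)

/-- The positive decision `(A ⟨B⟩⁺ C)`, unfolded according to its defining extension axioms:
`(A⟨0⟩⁺C) = A`, `(A⟨1⟩⁺C) = A ∨ C`, `(A⟨B₀∨B₁⟩⁺C) = (A⟨B₀⟩⁺C) ∨ (A⟨B₁⟩⁺C)`,
`(A⟨B₀ p B₁⟩⁺C) = (A⟨B₀⟩⁺C) p (A⟨B₁⟩⁺C)`, `(A⟨e_i⟩⁺C) = (A⟨E_i⟩⁺C)`.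
The fuel argument makes the recursion through extension axioms well-founded; for
well-founded `E` and `fuel ≥ B.extBound` it never runs out. -/
def pdAux (E : ℕ → ENDT) (A C : ENDT) : ℕ → ENDT → ENDT
  | _, .zero => A
  | _, .one => .orf A C
  | fuel, .orf B0 B1 => .orf (pdAux E A C fuel B0) (pdAux E A C fuel B1)
  | fuel, .dec B0 p B1 => .dec (pdAux E A C fuel B0) p (pdAux E A C fuel B1)
  | fuel, .ext i => if _h : i < fuel then pdAux E A C i (E i) else .zero
termination_by fuel B => (fuel, B.fsize)
decreasing_by
  · exact Prod.Lex.right _ (by simp [ENDT.fsize] <;> omega)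
  · exact Prod.Lex.right _ (by simp [ENDT.fsize] <;> omega)
  · exact Prod.Lex.right _ (by simp [ENDT.fsize] <;> omega)
  · exact Prod.Lex.right _ (by simp [ENDT.fsize] <;> omega)
  · exact Prod.Lex.left _ _ _h

/-- The positive decision `(A ⟨B⟩⁺ C)`. -/
def pd (E : ℕ → ENDT) (A B C : ENDT) : ENDT := pdAux E A C B.extBound B

section Semantics

variable {E : ℕ → ENDT} {α : ℕ → Bool}

theorem not_sat_zero : ¬Sat E α .zero := nofun

theorem sat_orf_iff {P Q : ENDT} : Sat E α (.orf P Q) ↔ Sat E α P ∨ Sat E α Q :=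
  ⟨fun | .orl h => .inl h | .orr h => .inr h, fun h => h.elim .orl .orr⟩

theorem sat_dec_iff {P Q : ENDT} {p : ℕ} :
    Sat E α (.dec P p Q) ↔ Sat E α (bif α p then Q else P) := by
  refine ⟨fun | .decF hp h | .decT hp h => by simpa [hp] using h, fun h => ?_⟩
  cases hp : α p
  · exact .decF hp (by simpa [hp] using h)
  · exact .decT hp (by simpa [hp] using h)

theorem sat_ext_iff {i : ℕ} : Sat E α (.ext i) ↔ Sat E α (E i) :=
  ⟨fun | .ext h => h, .ext⟩

/-- `hE` preserves the invariant `B.extBound ≤ fuel` when `e_i` is unfolded to `E i` with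
fuel `i`, so the fuel never runs out. -/
theorem sat_pdAux_iff (hE : ∀ i, (E i).extBound ≤ i) {A C : ENDT} {fuel : ℕ} {B : ENDT}
    (hB : B.extBound ≤ fuel) :
    Sat E α (pdAux E A C fuel B) ↔ Sat E α A ∨ (Sat E α B ∧ Sat E α C) := by
  fun_induction pdAux E A C fuel B with
  | case1 => simp [not_sat_zero]
  | case2 => simp [sat_orf_iff, Sat.one]
  | case3 fuel B₀ B₁ ih₀ ih₁ =>
    simp only [ENDT.extBound, max_le_iff] at hB
    rw [sat_orf_iff, ih₀ hB.1, ih₁ hB.2, sat_orf_iff]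
    tauto
  | case4 fuel B₀ p B₁ ih₀ ih₁ =>
    simp only [ENDT.extBound, max_le_iff] at hB
    rw [sat_dec_iff, sat_dec_iff]
    cases α p
    · exact ih₀ hB.1
    · exact ih₁ hB.2
  | case5 fuel i _ ih => rw [ih (hE i), sat_ext_iff]
  | case6 fuel i hi => simp only [ENDT.extBound] at hB; omega

end Semantics

/-- Truth conditions for positive decisions: (i) if `(A⟨B⟩⁺C)` is true then `A` or `B` is;
(ii) if `(A⟨B⟩⁺C)` is true then `A` or `C` is; (iii) if `A` is true then so is `(A⟨B⟩⁺C)`;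
(iv) if `B` and `C` are true then so is `(A⟨B⟩⁺C)`. Equivalently, `(A⟨B⟩⁺C)` is
semantically equivalent to `A ∨ (B ∧ C)`. -/
theorem posdec_truth_conditions (E : ℕ → ENDT) (hE : ∀ i, (E i).extBound ≤ i)
    (A B C : ENDT) (α : ℕ → Bool) :
    (Sat E α (pd E A B C) → Sat E α A ∨ Sat E α B) ∧
    (Sat E α (pd E A B C) → Sat E α A ∨ Sat E α C) ∧
    (Sat E α A → Sat E α (pd E A B C)) ∧
    (Sat E α B ∧ Sat E α C → Sat E α (pd E A B C)) ∧
    (Sat E α (pd E A B C) ↔ Sat E α A ∨ (Sat E α B ∧ Sat E α C)) := by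
  rw [pd, sat_pdAux_iff hE le_rfl]
  tauto
end

section
/- Semantic correctness of the k-decider: fix Boolean functions B_0,...,B_{N−1} and an assignment α under which exactly k of them are true (i.e., Thr^{B⃗}_k holds and Thr^{B⃗}_{k+1} fails). Then the k-decider DecExt^0_{0,0} (built from copies of the B_j with a counter and a flag) evaluates under α to A if B_i is false under α, and to C if B_i is true under α. -/
/-! Reading the decider from `j` to `N`, the counter `c` records how many true `B`'s were taken
and the flag records whether `B_i` was among them. Once the flag can no longer change, the node
`DecExt^j_{c,b}` is true exactly when the output for `b` is true and `k - c` lies between `0`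
and the number of true `B_m` with `m ≥ j`. Before `i`, the node is the disjunction of the two
possibilities for `B_i`, with `B_i` removed from the count. At `j = c = 0`, with exactly `k`
true values, only the disjunct matching the value of `B_i` survives. -/

/-- The decider nodes `DecExt^j_{c,b}` built from the Boolean values `B_0, …, B_{N-1}`,
with distinguished index `i`, target count `k`, and output values `A` (flag 0) and `C`
(flag 1):
`DecExt^j_{c,b} = DecExt^{j+1}_{c,b} ∨ (B_j ∧ DecExt^{j+1}_{c+1,b})` for `j < N`, `j ≠ i`;
`DecExt^i_{c,0} = DecExt^{i+1}_{c,0} ∨ (B_i ∧ DecExt^{i+1}_{c+1,1})`;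
`DecExt^N_{k,0} = A`, `DecExt^N_{k,1} = C`, `DecExt^N_{c,b} = 0` for `c ≠ k`. -/
def decExt (N i : ℕ) (k : ℤ) (A C : Bool) (B : ℕ → Bool) (j : ℕ) (c : ℤ) (b : Bool) : Bool :=
  if _h : j < N then
    if j = i ∧ b = false then
      decExt N i k A C B (j + 1) c false || (B i && decExt N i k A C B (j + 1) (c + 1) true)
    else
      decExt N i k A C B (j + 1) c b || (B j && decExt N i k A C B (j + 1) (c + 1) b)
  else if c = k then (if b then C else A) else false
termination_by N - j
decreasing_by all_goals omega

/-- The number of true values among `B_j, …, B_{N-1}`. -/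
def cnt (N : ℕ) (B : ℕ → Bool) (j : ℕ) : ℕ :=
  ((Finset.Ico j N).filter fun m => B m = true).card

lemma cnt_of_le {N j : ℕ} (B : ℕ → Bool) (h : N ≤ j) : cnt N B j = 0 := by
  simp [cnt, Finset.Ico_eq_empty_of_le h]

lemma cnt_of_lt {N j : ℕ} (B : ℕ → Bool) (h : j < N) :
    cnt N B j = (B j).toNat + cnt N B (j + 1) := by
  unfold cnt
  rw [← Finset.insert_Ico_add_one_left_eq_Ico h, Finset.filter_insert]
  cases B j <;> simp [Finset.card_insert_of_notMem, add_comm]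

lemma cnt_add_cnt {N i j : ℕ} (B : ℕ → Bool) (hji : j ≤ i) (hiN : i ≤ N) :
    cnt i B j + cnt N B i = cnt N B j := by
  unfold cnt
  rw [← Finset.card_union_of_disjoint
    (Finset.disjoint_filter_filter (Finset.Ico_disjoint_Ico_consecutive j i N)),
    ← Finset.filter_union, Finset.Ico_union_Ico_eq_Ico hji hiN]

lemma decide_Icc_or_shift (c k : ℤ) (n : ℕ) (b : Bool) :
    (decide (c ≤ k ∧ k ≤ c + n) || (b && decide (c + 1 ≤ k ∧ k ≤ c + 1 + n))) =
      decide (c ≤ k ∧ k ≤ c + (b.toNat + n : ℕ)) := by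
  rw [Bool.eq_iff_iff]
  cases b
  · simp
  · simp
    omega

section
variable {N i : ℕ} {k : ℤ} {A C : Bool} {B : ℕ → Bool}

lemma decExt_of_le {j : ℕ} (h : N ≤ j) (c : ℤ) (b : Bool) :
    decExt N i k A C B j c b = ((if b then C else A) && decide (c = k)) := by
  rw [decExt, dif_neg (by omega)]
  by_cases hc : c = k <;> simp [hc]

lemma decExt_of_lt {j : ℕ} (h : j < N) {b : Bool} (hb : b = true ∨ j ≠ i) (c : ℤ) :
    decExt N i k A C B j c b =
      (decExt N i k A C B (j + 1) c b || (B j && decExt N i k A C B (j + 1) (c + 1) b)) := by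
  rw [decExt, dif_pos h, if_neg (by rintro ⟨rfl, rfl⟩; simp at hb)]

lemma decExt_self (h : i < N) (c : ℤ) :
    decExt N i k A C B i c false =
      (decExt N i k A C B (i + 1) c false || (B i && decExt N i k A C B (i + 1) (c + 1) true)) := by
  rw [decExt, dif_pos h, if_pos ⟨rfl, rfl⟩]

lemma decExt_of_flag_fixed {j : ℕ} {b : Bool} (hb : b = true ∨ i < j) (c : ℤ) :
    decExt N i k A C B j c b =
      ((if b then C else A) && decide (c ≤ k ∧ k ≤ c + cnt N B j)) := by
  by_cases h : j < N
  · rw [decExt_of_lt h (hb.imp_right Nat.ne_of_gt), decExt_of_flag_fixed (hb.imp_right (by omega)),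
      decExt_of_flag_fixed (hb.imp_right (by omega)), cnt_of_lt B h, ← decide_Icc_or_shift]
    cases (if b then C else A) <;> simp
  · rw [decExt_of_le (not_lt.1 h), cnt_of_le B (not_lt.1 h)]
    simp only [Nat.cast_zero, add_zero, ← le_antisymm_iff]
termination_by N - j

-- `cnt i B j + cnt N B (i + 1)` counts the true `B_m` with `j ≤ m < N`, `m ≠ i`.
lemma decExt_false_of_le (hi : i < N) {j : ℕ} (hj : j ≤ i) (c : ℤ) :
    decExt N i k A C B j c false =
      ((A && decide (c ≤ k ∧ k ≤ c + (cnt i B j + cnt N B (i + 1) : ℕ))) ||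
        (B i && C && decide (c + 1 ≤ k ∧ k ≤ c + 1 + (cnt i B j + cnt N B (i + 1) : ℕ)))) := by
  rcases hj.eq_or_lt with rfl | hlt
  · rw [decExt_self hi, decExt_of_flag_fixed (.inr j.lt_succ_self),
      decExt_of_flag_fixed (.inl rfl), cnt_of_le B le_rfl]
    simp [Bool.and_assoc]
  · rw [decExt_of_lt (by omega) (.inr hlt.ne), decExt_false_of_le hi hlt c,
      decExt_false_of_le hi hlt (c + 1), cnt_of_lt B hlt, add_assoc (B j).toNat,
      ← decide_Icc_or_shift c, ← decide_Icc_or_shift (c + 1)]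
    cases A <;> cases C <;> cases B i <;> cases B j <;> simp
termination_by i - j

end

/-- Semantic correctness of the k-decider: under an assignment making exactly `k` of
`B_0, …, B_{N-1}` true, the decider `DecExt^0_{0,0}` evaluates to `A` if `B_i` is false
and to `C` if `B_i` is true. -/
theorem decider_correct (N i : ℕ) (hi : i < N) (k : ℤ) (A C : Bool) (B : ℕ → Bool)
    (hk : (cnt N B 0 : ℤ) = k) :
    decExt N i k A C B 0 0 false = if B i then C else A := by
  have hk' : k = (B i).toNat + (cnt i B 0 + cnt N B (i + 1) : ℕ) := by
    rw [← hk, ← cnt_add_cnt B (Nat.zero_le i) hi.le, cnt_of_lt B hi]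
    push_cast
    ring
  rw [decExt_false_of_le hi (Nat.zero_le i), hk']
  cases B i <;> cases A <;> cases C <;> simp <;> positivity
end

section
/- Low-count lemma for the decider: fix an assignment α and suppose exactly-l-counting holds on the suffix, i.e., at least l of B_j,...,B_{N−1} are true but not at least l+1. If l + c < k then DecExt^j_{c,b} evaluates to false under α. -/
lemma cnt_step (N : ℕ) (B : ℕ → Bool) (j : ℕ) (hjN : j < N) :
    cnt N B j = cnt N B (j+1) + (if B j then 1 else 0) := by
  unfold cnt
  rw [show Finset.Ico j N = insert j (Finset.Ico (j+1) N) by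
    ext m; simp [Finset.mem_Ico]; omega]
  rw [Finset.filter_insert]
  split <;> simp [Finset.card_insert_of_notMem, Finset.mem_filter, *]

/-- Low-count lemma for the decider: if exactly `l` of the suffix `B_j, …, B_{N-1}` are
true and `l + c < k`, then `DecExt^j_{c,b}` evaluates to false. -/
theorem decider_low_count (N i : ℕ) (hi : i < N) (k : ℤ) (A C : Bool) (B : ℕ → Bool)
    (j : ℕ) (hj : j ≤ N) (l c : ℤ) (hl : (cnt N B j : ℤ) = l) (hlc : l + c < k) (b : Bool) :
    decExt N i k A C B j c b = false := by
  suffices H : ∀ n jj, jj ≤ N → N - jj = n → ∀ c b, ((cnt N B jj : ℤ) + c < k) →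
      decExt N i k A C B jj c b = false by
    exact H (N - j) j hj rfl c b (by omega)
  clear hj hl hlc j l c b
  intro n
  induction n using Nat.strong_induction_on with
  | _ n ih =>
  intro j hj hN c b hlc
  rw [decExt]
  by_cases hjN : j < N
  · simp only [hjN, if_true, dif_pos]
    have hstep : (cnt N B j : ℤ) = cnt N B (j + 1) + (if B j then 1 else 0) := by
      have : cnt N B j = cnt N B (j+1) + (if B j then 1 else 0) := cnt_step N B j hjN
      rw [this]; push_cast; split <;> simp
    have h1 : decExt N i k A C B (j+1) c b = false := by
      refine ih (N - (j+1)) (by omega) (j+1) (by omega) rfl c b ?_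
      split at hstep <;> omega
    have h2 : B j = true → ∀ b', decExt N i k A C B (j+1) (c+1) b' = false := by
      intro hB b'
      refine ih (N - (j+1)) (by omega) (j+1) (by omega) rfl (c+1) b' ?_
      rw [hB, if_pos rfl] at hstep
      omega
    split
    · next h =>
      obtain ⟨hji, hb⟩ := h
      subst hb
      rw [h1, Bool.false_or]
      cases hB : B i with
      | false => simp
      | true => rw [h2 (hji ▸ hB) true]; simp
    · rw [h1, Bool.false_or]
      cases hB : B j with
      | false => simp
      | true => rw [h2 hB b]; simp
  · rw [dif_neg hjN]
    have : cnt N B j = 0 := by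
      unfold cnt
      have : Finset.Ico j N = ∅ := Finset.Ico_eq_empty (by omega)
      simp [this]
    rw [this] at hlc
    simp at hlc
    rw [if_neg (by omega)]
end

section
/- Non-uniform partial Immerman–Szelepcsényi: for Boolean functions B_0,...,B_{N−1} computed by nondeterministic branching programs of total size s, and for each i < N and k, there is a nondeterministic branching program of size polynomial in s and N which, on every assignment making exactly k of B_0,...,B_{N−1} true, computes the negation ¬B_i. In particular the program is a positive (monotone) combination of the programs B_0,...,B_{N−1}. -/
/-!
With `K` the number of accepting programs among `B_0, …, B_{N-1}`, the program `B_i` rejects iff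
at least `K` of the programs `B_j` with `j ≠ i` accept. This is checked by a single left-to-right
scan with a counter `c ≤ K`: at block `j ≠ i` the scan may guess that `B_j` accepts, verify the
guess by running a copy of `B_j`, and increment the counter on reaching its accepting sink. The
scan accepts iff the counter reaches `K` after the last block. Only accepting runs of the `B_j`
are used, so the result is a positive combination of them, with `O(N² s)` nodes.

Correctness is proved node by node: the intended meaning of each node satisfies the one-step
equation defining acceptance, which has a unique solution.
-/

/-- A nondeterministic branching program: a rooted DAG (nodes `0, …, size-1`, presented in
topological order, root `0`) with a distinguished accepting sink `sink1`; each node `v`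
is labelled by a propositional variable `label v` and has, for each Boolean `b`, a list of
successors `succ v b` (all strictly larger than `v`, ensuring acyclicity). -/
structure NBP where
  size : ℕ
  label : ℕ → ℕ
  succ : ℕ → Bool → List ℕ
  sink1 : ℕ
  sink1_lt : sink1 < size
  succ_lt : ∀ v b w, w ∈ succ v b → v < w ∧ w < size

/-- `P.acc α v`: there is a run from node `v` to the accepting sink consistent with `α`. -/
def NBP.acc (P : NBP) (α : ℕ → Bool) (v : ℕ) : Prop :=
  v = P.sink1 ∨ ∃ w, ∃ _h : w ∈ P.succ v (α (P.label v)), P.acc α w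
termination_by P.size - v
decreasing_by
  have := P.succ_lt v _ w _h
  omega

/-- `P` accepts `α`: some run from the root reaches the accepting sink. -/
def NBP.accepts (P : NBP) (α : ℕ → Bool) : Prop := P.acc α 0

namespace NBP

theorem acc_iff (P : NBP) (α : ℕ → Bool) (v : ℕ) :
    P.acc α v ↔ v = P.sink1 ∨ ∃ w ∈ P.succ v (α (P.label v)), P.acc α w := by
  rw [NBP.acc]
  simp only [exists_prop]

theorem acc_iff_of_forall_iff (P : NBP) (α : ℕ → Bool) {R : ℕ → Prop}
    (hR : ∀ v, R v ↔ v = P.sink1 ∨ ∃ w ∈ P.succ v (α (P.label v)), R w) (v : ℕ) :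
    P.acc α v ↔ R v := by
  induction h : P.size - v using Nat.strong_induction_on generalizing v with
  | _ n ih =>
    rw [acc_iff, hR]
    refine or_congr_right (exists_congr fun w => and_congr_right fun hw => ?_)
    have := P.succ_lt v _ w hw
    exact ih (P.size - w) (by omega) w rfl

end NBP

theorem Nat.mul_add_div_of_lt {a t n : ℕ} (h : t < n) : (a * n + t) / n = a := by
  rw [Nat.add_comm, Nat.add_mul_div_right _ _ (by omega), Nat.div_eq_of_lt h, Nat.zero_add]

theorem Nat.mul_add_lt_mul_add_of_lt {a a' t t' n : ℕ} (ha : a < a') (ht : t < n) :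
    a * n + t < a' * n + t' := by
  nlinarith

theorem Fin.ncard_le_val_and_eq_succ_add {N : ℕ} (P : Fin N → Prop) [DecidablePred P]
    (j : Fin N) :
    {m : Fin N | (j : ℕ) ≤ m ∧ P m}.ncard =
      {m : Fin N | (j : ℕ) + 1 ≤ m ∧ P m}.ncard + if P j then 1 else 0 := by
  split_ifs with hj
  · have hnot : j ∉ {m : Fin N | (j : ℕ) + 1 ≤ m ∧ P m} := fun h => by simp at h
    rw [← Set.ncard_insert_of_notMem hnot]
    congr 1
    ext m
    simp only [Set.mem_insert_iff, Set.mem_ofPred_eq]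
    constructor
    · rintro ⟨hjm, hm⟩
      rcases Nat.eq_or_lt_of_le hjm with h | h
      · exact Or.inl (Fin.ext h.symm)
      · exact Or.inr ⟨h, hm⟩
    · rintro (rfl | ⟨hjm, hm⟩)
      · exact ⟨le_rfl, hj⟩
      · exact ⟨by omega, hm⟩
  · congr 1
    ext m
    simp only [Set.mem_ofPred_eq]
    refine ⟨fun ⟨hjm, hm⟩ => ⟨?_, hm⟩, fun ⟨hjm, hm⟩ => ⟨by omega, hm⟩⟩
    rcases Nat.eq_or_lt_of_le hjm with h | h
    · exact absurd (Fin.ext h ▸ hm) hj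
    · exact h

theorem Fin.ncard_le_val_and_eq_zero {N j : ℕ} (P : Fin N → Prop) (hj : N ≤ j) :
    {m : Fin N | j ≤ m ∧ P m}.ncard = 0 := by
  rw [Set.ncard_eq_zero]
  exact Set.eq_empty_of_forall_notMem fun m hm => by have := m.2; have := hm.1; omega

namespace Decider

section Encoding

variable {K s : ℕ}

/-- Node `(j, c, t)` of the decider: in block `j` with counter value `c`, offset `0` is the
decision node and offset `u + 1` is the copy of node `u` of `B_j`. The mixed-radix layout orders
nodes lexicographically by `(j, c, t)`, so every edge increases the node number. -/
def node (K s j c t : ℕ) : ℕ := (j * (K + 1) + c) * (s + 1) + t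

def block (K s v : ℕ) : ℕ := v / (s + 1) / (K + 1)

def counter (K s v : ℕ) : ℕ := v / (s + 1) % (K + 1)

def offset (s v : ℕ) : ℕ := v % (s + 1)

theorem counter_le (v : ℕ) : counter K s v ≤ K :=
  Nat.le_of_lt_succ (Nat.mod_lt _ (Nat.succ_pos K))

theorem offset_le (v : ℕ) : offset s v ≤ s :=
  Nat.le_of_lt_succ (Nat.mod_lt _ (Nat.succ_pos s))

theorem node_block_counter_offset (v : ℕ) :
    node K s (block K s v) (counter K s v) (offset s v) = v := by
  rw [node, block, counter, offset, Nat.div_add_mod', Nat.div_add_mod']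

theorem decode_node {j c t : ℕ} (hc : c ≤ K) (ht : t ≤ s) :
    block K s (node K s j c t) = j ∧ counter K s (node K s j c t) = c ∧
      offset s (node K s j c t) = t := by
  have hc' : c < K + 1 := Nat.lt_succ_of_le hc
  have ht' : t < s + 1 := Nat.lt_succ_of_le ht
  simp only [node, block, counter, offset, Nat.mul_add_div_of_lt ht', Nat.mul_add_div_of_lt hc',
    Nat.mul_add_mod_of_lt ht', Nat.mul_add_mod_of_lt hc', and_self]

theorem node_inj {j c t j' c' t' : ℕ} (hc : c ≤ K) (ht : t ≤ s) (hc' : c' ≤ K)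
    (ht' : t' ≤ s) :
    node K s j c t = node K s j' c' t' ↔ j = j' ∧ c = c' ∧ t = t' := by
  refine ⟨fun h => ?_, by rintro ⟨rfl, rfl, rfl⟩; rfl⟩
  have h₁ := decode_node (j := j) hc ht
  have h₂ := decode_node (j := j') hc' ht'
  rw [h] at h₁
  omega

theorem node_lt_node {j c t j' c' t' : ℕ} (hc : c ≤ K) (ht : t ≤ s)
    (h : j < j' ∨ j = j' ∧ c < c' ∨ j = j' ∧ c = c' ∧ t < t') :
    node K s j c t < node K s j' c' t' := by
  have ht' : t < s + 1 := Nat.lt_succ_of_le ht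
  rcases h with h | ⟨rfl, h⟩ | ⟨rfl, rfl, h⟩
  · exact Nat.mul_add_lt_mul_add_of_lt (Nat.mul_add_lt_mul_add_of_lt h (Nat.lt_succ_of_le hc)) ht'
  · exact Nat.mul_add_lt_mul_add_of_lt (by omega) ht'
  · exact Nat.add_lt_add_left h _

theorem node_le_node {j c t j' c' t' : ℕ} (hc : c ≤ K) (ht : t ≤ s)
    (h : j < j' ∨ j = j' ∧ c < c' ∨ j = j' ∧ c = c' ∧ t ≤ t') :
    node K s j c t ≤ node K s j' c' t' := by
  rcases h with h | h | ⟨rfl, rfl, h⟩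
  · exact (node_lt_node hc ht (Or.inl h)).le
  · exact (node_lt_node hc ht (Or.inr (Or.inl h))).le
  · exact Nat.add_le_add_left h _

end Encoding

variable {N : ℕ} (Bs : Fin N → NBP) (i : Fin N) (K : ℕ)

abbrev totalSize : ℕ := ∑ j, (Bs j).size

theorem size_le_totalSize (j : Fin N) : (Bs j).size ≤ totalSize Bs :=
  Finset.single_le_sum (f := fun j => (Bs j).size) (fun _ _ => Nat.zero_le _) (Finset.mem_univ j)

def labelAt (j t : ℕ) : ℕ := if h : j < N then (Bs ⟨j, h⟩).label (t - 1) else 0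

/-- The decision node `(j, c, 0)` either skips `B_j` or, when `j ≠ i` and the counter can still
grow, enters the copy of `B_j`; leaving that copy through its accepting sink increments the
counter. The blocks `j ≥ N` have no edges: `(N, K, 0)` is the accepting sink. -/
def succAt (j c t : ℕ) (b : Bool) : List ℕ :=
  if h : j < N then
    if t = 0 then
      node K (totalSize Bs) (j + 1) c 0 ::
        if j ≠ i ∧ c < K then [node K (totalSize Bs) j c 1] else []
    else
      ((Bs ⟨j, h⟩).succ (t - 1) b).map (fun u => node K (totalSize Bs) j c (u + 1)) ++
        if t - 1 = (Bs ⟨j, h⟩).sink1 ∧ c < K then [node K (totalSize Bs) (j + 1) (c + 1) 0]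
        else []
  else []

theorem succAt_lt {j c t w : ℕ} {b : Bool} (hc : c ≤ K) (ht : t ≤ totalSize Bs)
    (hw : w ∈ succAt Bs i K j c t b) :
    node K (totalSize Bs) j c t < w ∧ w ≤ node K (totalSize Bs) N K 0 := by
  unfold succAt at hw
  split_ifs at hw with hj ht0 hguard hguard
  · simp only [List.mem_cons, List.not_mem_nil, or_false] at hw
    rcases hw with rfl | rfl
    · exact ⟨node_lt_node hc ht (by omega), node_le_node hc (Nat.zero_le _) (by omega)⟩
    · have := size_le_totalSize Bs ⟨j, hj⟩
      have := (Bs ⟨j, hj⟩).sink1_lt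
      exact ⟨node_lt_node hc ht (by omega), node_le_node hc (by omega) (by omega)⟩
  · simp only [List.mem_cons, List.not_mem_nil, or_false] at hw
    exact hw ▸ ⟨node_lt_node hc ht (by omega), node_le_node hc (Nat.zero_le _) (by omega)⟩
  · simp only [List.mem_append, List.mem_map, List.mem_singleton] at hw
    rcases hw with ⟨u, hu, rfl⟩ | rfl
    · have := (Bs ⟨j, hj⟩).succ_lt _ _ _ hu
      have := size_le_totalSize Bs ⟨j, hj⟩
      exact ⟨node_lt_node hc ht (by omega), node_le_node hc (by omega) (by omega)⟩
    · exact ⟨node_lt_node hc ht (by omega), node_le_node (by omega) (Nat.zero_le _) (by omega)⟩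
  · simp only [List.mem_append, List.mem_map, List.not_mem_nil, or_false] at hw
    obtain ⟨u, hu, rfl⟩ := hw
    have := (Bs ⟨j, hj⟩).succ_lt _ _ _ hu
    have := size_le_totalSize Bs ⟨j, hj⟩
    exact ⟨node_lt_node hc ht (by omega), node_le_node hc (by omega) (by omega)⟩
  · simp at hw

end Decider

open Decider

def decider {N : ℕ} (Bs : Fin N → NBP) (i : Fin N) (K : ℕ) : NBP where
  size := node K (totalSize Bs) N K 0 + 1
  label v := labelAt Bs (block K (totalSize Bs) v) (offset (totalSize Bs) v)
  succ v b := succAt Bs i K (block K (totalSize Bs) v) (counter K (totalSize Bs) v)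
    (offset (totalSize Bs) v) b
  sink1 := node K (totalSize Bs) N K 0
  sink1_lt := Nat.lt_succ_self _
  succ_lt v b w hw := by
    have := succAt_lt Bs i K (counter_le v) (offset_le v) hw
    rw [node_block_counter_offset] at this
    omega

namespace Decider

variable {N : ℕ} (Bs : Fin N → NBP) (i : Fin N) (K : ℕ) (α : ℕ → Bool)

noncomputable def suffixCount (j : ℕ) : ℕ :=
  {m : Fin N | j ≤ m ∧ m ≠ i ∧ (Bs m).accepts α}.ncard

/-- The intended meaning of node `(j, c, t)`. At a decision node it is the paper's
`DecExt^j_{c,0}` with `k = K`; the paper's branch through `B_i` leads to `DecExt^{i+1}_{c+1,1}`,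
which is identically false, and is left out. -/
def meaning (j c t : ℕ) : Prop :=
  if t = 0 then j ≤ N ∧ c ≤ K ∧ K ≤ c + suffixCount Bs i α j
  else ∃ hj : j < N,
    (Bs ⟨j, hj⟩).acc α (t - 1) ∧ c < K ∧ K ≤ c + 1 + suffixCount Bs i α (j + 1)

def meaningAt (v : ℕ) : Prop :=
  meaning Bs i K α (block K (totalSize Bs) v) (counter K (totalSize Bs) v)
    (offset (totalSize Bs) v)

theorem meaningAt_node {j c t : ℕ} (hc : c ≤ K) (ht : t ≤ totalSize Bs) :
    meaningAt Bs i K α (node K (totalSize Bs) j c t) ↔ meaning Bs i K α j c t := by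
  obtain ⟨hj, hc, ht⟩ := decode_node (j := j) hc ht
  rw [meaningAt, hj, hc, ht]

open Classical in
theorem suffixCount_eq_add {j : ℕ} (hj : j < N) :
    suffixCount Bs i α j = suffixCount Bs i α (j + 1) +
      if j ≠ i ∧ (Bs ⟨j, hj⟩).accepts α then 1 else 0 := by
  simp only [suffixCount]
  rw [Fin.ncard_le_val_and_eq_succ_add (fun m => m ≠ i ∧ (Bs m).accepts α) ⟨j, hj⟩]
  simp [Fin.ext_iff]

theorem meaning_iff_of_le {j c t : ℕ} (hj : N ≤ j) (hc : c ≤ K) (ht : t ≤ totalSize Bs) :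
    meaning Bs i K α j c t ↔ node K (totalSize Bs) j c t = node K (totalSize Bs) N K 0 ∨
      ∃ w ∈ succAt Bs i K j c t (α (labelAt Bs j t)), meaningAt Bs i K α w := by
  have hcount : suffixCount Bs i α j = 0 := Fin.ncard_le_val_and_eq_zero _ hj
  simp only [succAt, dif_neg (Nat.not_lt.2 hj), List.not_mem_nil, false_and, exists_false,
    or_false, node_inj hc ht le_rfl (Nat.zero_le _), meaning]
  split_ifs <;> simp_all; omega

theorem meaning_iff_of_decision {j c : ℕ} (hj : j < N) (hc : c ≤ K) :
    meaning Bs i K α j c 0 ↔ node K (totalSize Bs) j c 0 = node K (totalSize Bs) N K 0 ∨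
      ∃ w ∈ succAt Bs i K j c 0 (α (labelAt Bs j 0)), meaningAt Bs i K α w := by
  have hs : 1 ≤ totalSize Bs :=
    Nat.zero_lt_of_lt ((Bs ⟨j, hj⟩).sink1_lt.trans_le (size_le_totalSize Bs ⟨j, hj⟩))
  have hsink : node K (totalSize Bs) j c 0 ≠ node K (totalSize Bs) N K 0 := fun h =>
    hj.ne ((node_inj hc (Nat.zero_le _) le_rfl (Nat.zero_le _)).1 h).1
  have hcount := suffixCount_eq_add Bs i α hj
  simp only [succAt, dif_pos hj, if_true, hsink, false_or]
  split_ifs with hguard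
  · simp only [List.mem_cons, List.not_mem_nil, or_false, exists_eq_or_imp, exists_eq_left,
      meaningAt_node Bs i K α hc (Nat.zero_le _),
      meaningAt_node Bs i K α (Nat.le_of_lt hguard.2) hs, meaning, if_true, one_ne_zero,
      if_false, Nat.sub_self, exists_prop_of_true hj]
    rw [← NBP.accepts]
    by_cases hacc : (Bs ⟨j, hj⟩).accepts α
    · rw [if_pos ⟨hguard.1, hacc⟩] at hcount
      simp only [hacc, true_and]
      omega
    · rw [if_neg (fun h => hacc h.2)] at hcount
      simp only [hacc, false_and, or_false]
      omega
  · simp only [List.mem_cons, List.not_mem_nil, or_false, exists_eq_left,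
      meaningAt_node Bs i K α hc (Nat.zero_le _), meaning, if_true]
    split_ifs at hcount <;> omega

theorem meaning_iff_of_copy {j c u : ℕ} (hj : j < N) (hc : c ≤ K)
    (hu : u + 1 ≤ totalSize Bs) :
    meaning Bs i K α j c (u + 1) ↔
      node K (totalSize Bs) j c (u + 1) = node K (totalSize Bs) N K 0 ∨
      ∃ w ∈ succAt Bs i K j c (u + 1) (α (labelAt Bs j (u + 1))), meaningAt Bs i K α w := by
  set B := Bs ⟨j, hj⟩ with hB
  have hsink : node K (totalSize Bs) j c (u + 1) ≠ node K (totalSize Bs) N K 0 := fun h =>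
    hj.ne ((node_inj hc hu le_rfl (Nat.zero_le _)).1 h).1
  have hinner : ∀ a ∈ B.succ u (α (B.label u)),
      meaningAt Bs i K α (node K (totalSize Bs) j c (a + 1)) ↔
        B.acc α a ∧ c < K ∧ K ≤ c + 1 + suffixCount Bs i α (j + 1) := by
    intro a ha
    have := B.succ_lt _ _ _ ha
    have := hB ▸ size_le_totalSize Bs ⟨j, hj⟩
    rw [meaningAt_node Bs i K α hc (by omega), meaning, if_neg (Nat.add_one_ne_zero a),
      Nat.add_sub_cancel, exists_prop_of_true hj]
  have hexit : (∃ w ∈ (if u = B.sink1 ∧ c < K then [node K (totalSize Bs) (j + 1) (c + 1) 0]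
      else []), meaningAt Bs i K α w) ↔
      u = B.sink1 ∧ c < K ∧ K ≤ c + 1 + suffixCount Bs i α (j + 1) := by
    split_ifs with h
    · simp only [List.mem_singleton, exists_eq_left, meaning, if_true,
        meaningAt_node Bs i K α (Nat.succ_le_of_lt h.2) (Nat.zero_le _)]
      omega
    · simp only [List.not_mem_nil, false_and, exists_false, false_iff]
      omega
  rw [meaning, if_neg (Nat.add_one_ne_zero u), Nat.add_sub_cancel, exists_prop_of_true hj,
    NBP.acc_iff]
  simp only [succAt, labelAt, dif_pos hj, if_neg (Nat.add_one_ne_zero u), Nat.add_sub_cancel,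
    hsink, false_or, List.mem_append, List.mem_map, or_and_right, exists_or,
    exists_exists_and_eq_and, ← hB, hexit]
  rw [exists_congr fun a => and_congr_right (hinner a)]
  simp only [← and_assoc, exists_and_right]
  exact or_comm

theorem meaning_iff_step {j c t : ℕ} (hc : c ≤ K) (ht : t ≤ totalSize Bs) :
    meaning Bs i K α j c t ↔ node K (totalSize Bs) j c t = node K (totalSize Bs) N K 0 ∨
      ∃ w ∈ succAt Bs i K j c t (α (labelAt Bs j t)), meaningAt Bs i K α w := by
  rcases lt_or_ge j N with hj | hj
  · rcases t with _ | u
    · exact meaning_iff_of_decision Bs i K α hj hc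
    · exact meaning_iff_of_copy Bs i K α hj hc ht
  · exact meaning_iff_of_le Bs i K α hj hc ht

end Decider

section

variable {N : ℕ} (Bs : Fin N → NBP) (i : Fin N) (K : ℕ) (α : ℕ → Bool)

theorem decider_acc_iff (v : ℕ) : (decider Bs i K).acc α v ↔ meaningAt Bs i K α v := by
  refine NBP.acc_iff_of_forall_iff _ α (fun w => ?_) v
  have := meaning_iff_step Bs i K α (j := block K (totalSize Bs) w)
    (counter_le (s := totalSize Bs) w) (offset_le w)
  rwa [node_block_counter_offset] at this

theorem decider_accepts_iff :
    (decider Bs i K).accepts α ↔ K ≤ {m : Fin N | m ≠ i ∧ (Bs m).accepts α}.ncard := by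
  have h0 : node K (totalSize Bs) 0 0 0 = 0 := by simp [node]
  rw [NBP.accepts, decider_acc_iff, ← h0,
    meaningAt_node Bs i K α (Nat.zero_le _) (Nat.zero_le _)]
  simp [meaning, suffixCount]

theorem decider_accepts_iff_not (hK : {m : Fin N | (Bs m).accepts α}.ncard = K) :
    (decider Bs i K).accepts α ↔ ¬ (Bs i).accepts α := by
  have hdiff : {m : Fin N | m ≠ i ∧ (Bs m).accepts α} = {m | (Bs m).accepts α} \ {i} := by
    ext m; simp [and_comm]
  rw [decider_accepts_iff, hdiff]
  by_cases hi : (Bs i).accepts α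
  · have := Set.ncard_sdiff_singleton_add_one (s := {m : Fin N | (Bs m).accepts α}) hi
    simp only [hi, not_true_eq_false, iff_false]
    omega
  · rw [Set.sdiff_singleton_eq_self (s := {m : Fin N | (Bs m).accepts α}) hi]
    simp only [hi, not_false_eq_true, iff_true]
    omega

theorem decider_size_le (hK : K ≤ N) :
    (decider Bs i K).size ≤ (totalSize Bs + N + 1) ^ 3 := by
  have hlayers : N * (K + 1) + K + 1 ≤ (N + 1) ^ 2 := by nlinarith
  calc (decider Bs i K).size = (N * (K + 1) + K) * (totalSize Bs + 1) + 1 := rfl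
    _ ≤ (N * (K + 1) + K + 1) * (totalSize Bs + 1) := by
      rw [Nat.add_mul _ 1, Nat.one_mul]
      exact Nat.add_le_add_left (Nat.le_add_left 1 _) _
    _ ≤ (N + 1) ^ 2 * (totalSize Bs + 1) := Nat.mul_le_mul_right _ hlayers
    _ ≤ (totalSize Bs + N + 1) ^ 2 * (totalSize Bs + N + 1) :=
      Nat.mul_le_mul (Nat.pow_le_pow_left (by omega) 2) (by omega)
    _ = (totalSize Bs + N + 1) ^ 3 := (pow_succ _ 2).symm

end

/-- Non-uniform partial Immerman–Szelepcsényi: there is a fixed polynomial `p` such that,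
for Boolean functions computed by NBPs `B_0, …, B_{N−1}` of total size `s`, and for each
`i < N` and `k`, there is an NBP of size at most `p (s + N)` which, on every assignment
making exactly `k` of `B_0, …, B_{N−1}` true, computes the negation `¬B_i`. -/
theorem nonuniform_immerman_szelepcsenyi :
    ∃ p : Polynomial ℕ, ∀ (N : ℕ) (Bs : Fin N → NBP) (i : Fin N) (k : ℤ),
      ∃ Q : NBP,
        Q.size ≤ p.eval ((∑ j, (Bs j).size) + N) ∧
        ∀ α : ℕ → Bool,
          (({j : Fin N | (Bs j).accepts α}.ncard : ℤ) = k) →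
          (Q.accepts α ↔ ¬ (Bs i).accepts α) := by
  refine ⟨(Polynomial.X + 1) ^ 3, fun N Bs i k =>
    ⟨decider Bs i (min k.toNat N), ?_, fun α hα => decider_accepts_iff_not Bs i _ α ?_⟩⟩
  · simpa using decider_size_le Bs i _ (min_le_right _ _)
  · have := Set.ncard_le_card {j : Fin N | (Bs j).accepts α}
    rw [Nat.card_eq_fintype_card, Fintype.card_fin] at this
    omega
end
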